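/- Assume x† satisfies the source condition K*w = x† + ηξ for some w ∈ H, η > 0 and ξ ∈ ∂‖·‖_{ℓ¹}(x†), let ‖y^δ − y†‖ ≤ δ where Kx† = y†, and let β > 0 be determined by the discrepancy principle ‖Kx_{ηβ,β}^δ − y^δ‖ = δ. Then ‖x_{ηβ,β}^δ − x†‖_{ℓ²} ≤ 2‖w‖^{1/2} δ^{1/2}. If moreover x† has finite support, K has the finite basis injectivity property, and c₁, c₂ > 0 satisfy R_η(x) − R_η(x†) ≥ c₁‖x − x†‖_{ℓ²} − c₂‖K(x − x†)‖ for all x, then ‖x_{ηβ,β}^δ − x†‖_{ℓ²} ≤ (2c₂/c₁) δ. -/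

import Mathlib

noncomputable section

open Filter Topology

/-- `ℓ²(ℕ, ℝ)`. -/
abbrev ltwo : Type := lp (fun _ : ℕ => ℝ) 2

/-- `x ∈ ℓ¹`. -/
def inL1 (x : ltwo) : Prop := Memℓp (fun i => x i) 1

/-- The `ℓ¹`-norm `‖x‖_{ℓ¹} = ∑ |xᵢ|` (junk value if `x ∉ ℓ¹`). -/
noncomputable def l1norm (x : ltwo) : ℝ := ∑' i, |x i|

/-- The elastic-net functional `Φ_{α,β}(x) = ½‖Kx − y‖² + α‖x‖₁ + (β/2)‖x‖₂²`,
real-valued on its effective domain `ℓ¹ ∩ ℓ²` (the convention `Φ = +∞` off `ℓ¹` is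
implemented by restricting all statements to `inL1`). -/
noncomputable def Phi {H : Type*} [NormedAddCommGroup H] [InnerProductSpace ℝ H]
    (K : ltwo →L[ℝ] H) (y : H) (α β : ℝ) (x : ltwo) : ℝ :=
  (1 / 2) * ‖K x - y‖ ^ 2 + α * l1norm x + (β / 2) * ‖x‖ ^ 2

/-- `x` is a minimizer of `Φ_{α,β}` over `ℓ²` (with the `+∞` convention off `ℓ¹`). -/
def IsMinimizer {H : Type*} [NormedAddCommGroup H] [InnerProductSpace ℝ H]
    (K : ltwo →L[ℝ] H) (y : H) (α β : ℝ) (x : ltwo) : Prop :=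
  inL1 x ∧ ∀ z : ltwo, inL1 z → Phi K y α β x ≤ Phi K y α β z


/-- The functional `R_η(x) = η‖x‖₁ + ½‖x‖₂²` (finite on `ℓ¹ ∩ ℓ²`). -/
noncomputable def Rfun (η : ℝ) (x : ltwo) : ℝ := η * l1norm x + (1 / 2) * ‖x‖ ^ 2

/-- `K` has the finite basis injectivity property. -/
def FBI {H : Type*} [NormedAddCommGroup H] [InnerProductSpace ℝ H]
    (K : ltwo →L[ℝ] H) : Prop :=
  ∀ I : Finset ℕ, ∀ u v : ltwo, K u = K v →
    (∀ i ∉ I, u i = 0) → (∀ i ∉ I, v i = 0) → u = v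

/-
Since `ξ ∈ ∂‖·‖₁(x†)`, the vector `x† + ηξ = K*w` is a subgradient of `R_η` at `x†`, and because the
`½‖·‖²` part is 1-strongly convex, the Bregman distance
`R_η(x) − R_η(x†) − ⟨w, K(x − x†)⟩` dominates `½‖x − x†‖²`. The discrepancy principle bounds
`‖K(x − x†)‖` by `2δ`, and minimality of `x` together with `‖Kx − y^δ‖ = δ ≥ ‖Kx† − y^δ‖` gives
`R_η(x) ≤ R_η(x†)`. Hence `½‖x − x†‖² ≤ 2δ‖w‖`. In the sparse case the assumed lower bound on
`R_η(x) − R_η(x†) ≤ 0` gives `c₁‖x − x†‖ ≤ c₂‖K(x − x†)‖ ≤ 2c₂δ` directly.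
-/

theorem Real.sign_mul_self_eq_abs (r : ℝ) : Real.sign r * r = |r| := by
  rcases lt_trichotomy r 0 with h | rfl | h
  · rw [Real.sign_of_neg h, abs_of_neg h, neg_one_mul]
  · simp
  · rw [Real.sign_of_pos h, abs_of_pos h, one_mul]

theorem mul_sub_le_abs_sub_abs {t a b : ℝ} (hsign : a ≠ 0 → t = Real.sign a) (ht : |t| ≤ 1) :
    t * (b - a) ≤ |b| - |a| := by
  have hta : t * a = |a| := by
    by_cases ha : a = 0
    · simp [ha]
    · rw [hsign ha, Real.sign_mul_self_eq_abs]
  have htb : t * b ≤ |b| :=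
    calc t * b ≤ |t| * |b| := (le_abs_self _).trans (abs_mul t b).le
      _ ≤ |b| := mul_le_of_le_one_left (abs_nonneg b) ht
  linarith [mul_sub t b a]

theorem inL1.summable_abs {x : ltwo} (hx : inL1 x) : Summable fun i => |x i| := by
  simpa using (memℓp_gen_iff (p := 1) (by norm_num)).mp hx

section SubgradientL1

variable {ξ : ℕ → ℝ} {x z : ltwo}

theorem summable_mul_sub_of_inL1 (hξ : ∀ i, |ξ i| ≤ 1) (hx : inL1 x) (hz : inL1 z) :
    Summable fun i => ξ i * (z i - x i) := by
  refine .of_norm_bounded (hz.summable_abs.add hx.summable_abs) fun i => ?_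
  rw [Real.norm_eq_abs, abs_mul]
  exact mul_le_of_le_one_left (abs_nonneg _) (hξ i) |>.trans (abs_sub _ _)

theorem tsum_mul_sub_le_l1norm_sub (hsign : ∀ i, x i ≠ 0 → ξ i = Real.sign (x i))
    (hξ : ∀ i, |ξ i| ≤ 1) (hx : inL1 x) (hz : inL1 z) :
    ∑' i, ξ i * (z i - x i) ≤ l1norm z - l1norm x := by
  rw [l1norm, l1norm, ← hz.summable_abs.tsum_sub hx.summable_abs]
  exact (summable_mul_sub_of_inL1 hξ hx hz).tsum_le_tsum
    (fun i => mul_sub_le_abs_sub_abs (hsign i) (hξ i)) (hz.summable_abs.sub hx.summable_abs)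

theorem half_norm_sub_sq_le_Rfun_sub {η : ℝ} (hη : 0 ≤ η)
    (hsign : ∀ i, x i ≠ 0 → ξ i = Real.sign (x i)) (hξ : ∀ i, |ξ i| ≤ 1)
    (hx : inL1 x) (hz : inL1 z) {q : ltwo} (hq : ∀ i, q i = x i + η * ξ i) :
    (1 / 2) * ‖z - x‖ ^ 2 ≤ Rfun η z - Rfun η x - inner ℝ q (z - x) := by
  have hinner : inner ℝ (q - x) (z - x) = η * ∑' i, ξ i * (z i - x i) := by
    rw [lp.inner_eq_tsum, ← tsum_mul_left]
    congr 1 with i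
    simp [hq i, mul_assoc, mul_comm]
  have hsub := mul_le_mul_of_nonneg_left (tsum_mul_sub_le_l1norm_sub hsign hξ hx hz) hη
  have hsq : ‖z - x‖ ^ 2 = ‖z‖ ^ 2 - 2 * inner ℝ x (z - x) - ‖x‖ ^ 2 := by
    rw [norm_sub_sq_real, inner_sub_right, real_inner_self_eq_norm_sq, real_inner_comm]
    ring
  rw [← sub_add_cancel q x, inner_add_left, hinner, Rfun, Rfun]
  nlinarith

end SubgradientL1

theorem Phi_mul_eq {H : Type*} [NormedAddCommGroup H] [InnerProductSpace ℝ H]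
    (K : ltwo →L[ℝ] H) (y : H) (η β : ℝ) (x : ltwo) :
    Phi K y (η * β) β x = (1 / 2) * ‖K x - y‖ ^ 2 + β * Rfun η x := by
  rw [Phi, Rfun]
  ring

theorem IsMinimizer.Rfun_le {H : Type*} [NormedAddCommGroup H] [InnerProductSpace ℝ H]
    {K : ltwo →L[ℝ] H} {y : H} {η β : ℝ} {x z : ltwo} (hx : IsMinimizer K y (η * β) β x)
    (hβ : 0 < β) (hz : inL1 z) (hres : ‖K z - y‖ ≤ ‖K x - y‖) :
    Rfun η x ≤ Rfun η z := by
  have hmin := hx.2 z hz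
  rw [Phi_mul_eq, Phi_mul_eq] at hmin
  have hsq : ‖K z - y‖ ^ 2 ≤ ‖K x - y‖ ^ 2 := pow_le_pow_left₀ (norm_nonneg _) hres 2
  exact le_of_mul_le_mul_left (by linarith) hβ

theorem elasticNet_discrepancy_principle_rates_general
    {H : Type*} [NormedAddCommGroup H] [InnerProductSpace ℝ H] [CompleteSpace H]
    (K : ltwo →L[ℝ] H) (ydag ydelta : H) (δ : ℝ)
    (xdag : ltwo) (hxdag1 : inL1 xdag) (hKxdag : K xdag = ydag)
    (hnoise : ‖ydelta - ydag‖ ≤ δ)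
    (η : ℝ) (hη : 0 < η) (w : H) (ξ : ℕ → ℝ)
    (hξ1 : ∀ i, xdag i ≠ 0 → ξ i = Real.sign (xdag i))
    (hξ2 : ∀ i, |ξ i| ≤ 1)
    (hsource : ∀ i, (ContinuousLinearMap.adjoint K w) i = xdag i + η * ξ i)
    (β : ℝ) (hβ : 0 < β)
    (x : ltwo) (hx : IsMinimizer K ydelta (η * β) β x)
    (hdiscr : ‖K x - ydelta‖ = δ) :
    ‖x - xdag‖ ≤ 2 * Real.sqrt ‖w‖ * Real.sqrt δ ∧
      ({i : ℕ | xdag i ≠ 0}.Finite → FBI K →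
        ∀ c₁ c₂ : ℝ, 0 < c₁ → 0 < c₂ →
          (∀ z : ltwo, inL1 z →
            c₁ * ‖z - xdag‖ - c₂ * ‖K (z - xdag)‖ ≤ Rfun η z - Rfun η xdag) →
          ‖x - xdag‖ ≤ 2 * c₂ / c₁ * δ) := by
  have hres : ‖K xdag - ydelta‖ ≤ ‖K x - ydelta‖ := by
    rwa [hKxdag, norm_sub_rev, hdiscr]
  have hR : Rfun η x ≤ Rfun η xdag := hx.Rfun_le hβ hxdag1 hres
  have hKd : ‖K (x - xdag)‖ ≤ 2 * δ := by
    rw [map_sub, hKxdag]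
    linarith [norm_sub_le_norm_sub_add_norm_sub (K x) ydelta ydag]
  refine ⟨?_, fun _ _ c₁ c₂ hc₁ hc₂ hlower => ?_⟩
  · have hbregman := half_norm_sub_sq_le_Rfun_sub hη.le hξ1 hξ2 hxdag1 hx.1 hsource
    rw [ContinuousLinearMap.adjoint_inner_left] at hbregman
    have hpair : -(‖w‖ * (2 * δ)) ≤ inner ℝ w (K (x - xdag)) :=
      (neg_le_neg (mul_le_mul_of_nonneg_left hKd (norm_nonneg w))).trans
        (neg_le_of_abs_le (abs_real_inner_le_norm w _))
    have hδ : 0 ≤ δ := hdiscr ▸ norm_nonneg _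
    have hsq : ‖x - xdag‖ ^ 2 ≤ (2 * Real.sqrt ‖w‖ * Real.sqrt δ) ^ 2 := by
      rw [mul_pow, mul_pow, Real.sq_sqrt (norm_nonneg w), Real.sq_sqrt hδ]
      linarith
    exact (pow_le_pow_iff_left₀ (norm_nonneg _) (by positivity) two_ne_zero).mp hsq
  · have := hlower x hx.1
    rw [div_mul_eq_mul_div, le_div_iff₀ hc₁]
    nlinarith [mul_le_mul_of_nonneg_left hKd hc₂.le]

/-- Convergence rates for the discrepancy principle: under the source condition,
`‖x_{ηβ,β}^δ − x†‖₂ ≤ 2‖w‖^{1/2}δ^{1/2}`; if moreover `x†` is sparse, `K` has the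
finite basis injectivity property and `R_η(x) − R_η(x†) ≥ c₁‖x − x†‖₂ − c₂‖K(x − x†)‖`,
then `‖x_{ηβ,β}^δ − x†‖₂ ≤ (2c₂/c₁)δ`. -/
theorem elasticNet_discrepancy_principle_rates
    {H : Type*} [NormedAddCommGroup H] [InnerProductSpace ℝ H] [CompleteSpace H]
    (K : ltwo →L[ℝ] H) (ydag ydelta : H) (δ : ℝ) (hδ : 0 < δ)
    (xdag : ltwo) (hxdag1 : inL1 xdag) (hKxdag : K xdag = ydag)
    (hnoise : ‖ydelta - ydag‖ ≤ δ)
    (η : ℝ) (hη : 0 < η) (w : H) (ξ : ℕ → ℝ)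
    (hξ1 : ∀ i, xdag i ≠ 0 → ξ i = Real.sign (xdag i))
    (hξ2 : ∀ i, |ξ i| ≤ 1)
    (hsource : ∀ i, (ContinuousLinearMap.adjoint K w) i = xdag i + η * ξ i)
    (β : ℝ) (hβ : 0 < β)
    (x : ltwo) (hx : IsMinimizer K ydelta (η * β) β x)
    (hdiscr : ‖K x - ydelta‖ = δ) :
    ‖x - xdag‖ ≤ 2 * Real.sqrt ‖w‖ * Real.sqrt δ ∧
      ({i : ℕ | xdag i ≠ 0}.Finite → FBI K →
        ∀ c₁ c₂ : ℝ, 0 < c₁ → 0 < c₂ →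
          (∀ z : ltwo, inL1 z →
            c₁ * ‖z - xdag‖ - c₂ * ‖K (z - xdag)‖ ≤ Rfun η z - Rfun η xdag) →
          ‖x - xdag‖ ≤ 2 * c₂ / c₁ * δ) :=
  elasticNet_discrepancy_principle_rates_general K ydag ydelta δ xdag hxdag1 hKxdag hnoise η hη w ξ
    hξ1 hξ2 hsource β hβ x hx hdiscr
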